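/- Let J be a nonempty proper subset of {1,…,n} and let A ∈ ℝ^{n×n} satisfy A_{JJ} < 0, A_{J^cJ^c} < 0, A_{JJ^c} > 0, A_{J^cJ} > 0 entrywise. Then A is an N-matrix if and only if: whenever x ∈ ℝ^n satisfies x_i (Ax)_i ≤ 0 for all i, either (x_J ≤ 0 and x_{J^c} ≥ 0) or (x_J ≥ 0 and x_{J^c} ≤ 0). -/

import Mathlib

open Matrix Finset

def IsPMatrix {n : ℕ} (A : Matrix (Fin n) (Fin n) ℝ) : Prop :=
  ∀ s : Finset (Fin n),
    0 < (A.submatrix (fun i : s => (i : Fin n)) (fun j : s => (j : Fin n))).det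

def IsNMatrix {n : ℕ} (A : Matrix (Fin n) (Fin n) ℝ) : Prop :=
  ∀ s : Finset (Fin n), s.Nonempty →
    (A.submatrix (fun i : s => (i : Fin n)) (fun j : s => (j : Fin n))).det < 0

def IsAlmostPMatrix {n : ℕ} (A : Matrix (Fin n) (Fin n) ℝ) : Prop :=
  (∀ s : Finset (Fin n), s.Nonempty → s ≠ Finset.univ →
    0 < (A.submatrix (fun i : s => (i : Fin n)) (fun j : s => (j : Fin n))).det) ∧
  A.det < 0

def IntervalHull {m n : ℕ} (A B : Matrix (Fin m) (Fin n) ℝ) :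
    Set (Matrix (Fin m) (Fin n) ℝ) :=
  {C | ∀ i j, ∃ t : ℝ, t ∈ Set.Icc (0:ℝ) 1 ∧ C i j = t * A i j + (1 - t) * B i j}

noncomputable def Iu {m n : ℕ} (A B : Matrix (Fin m) (Fin n) ℝ) : Matrix (Fin m) (Fin n) ℝ :=
  fun i j => max (A i j) (B i j)

noncomputable def Il {m n : ℕ} (A B : Matrix (Fin m) (Fin n) ℝ) : Matrix (Fin m) (Fin n) ℝ :=
  fun i j => min (A i j) (B i j)

noncomputable def Ic {m n : ℕ} (A B : Matrix (Fin m) (Fin n) ℝ) : Matrix (Fin m) (Fin n) ℝ :=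
  fun i j => (A i j + B i j) / 2

noncomputable def Dlt {m n : ℕ} (A B : Matrix (Fin m) (Fin n) ℝ) : Matrix (Fin m) (Fin n) ℝ :=
  fun i j => (Iu A B i j - Il A B i j) / 2

noncomputable def Iz {n : ℕ} (A B : Matrix (Fin n) (Fin n) ℝ) (z : Fin n → ℝ) :
    Matrix (Fin n) (Fin n) ℝ :=
  Ic A B - Matrix.diagonal z * Dlt A B * Matrix.diagonal z

def SignVec {n : ℕ} (z : Fin n → ℝ) : Prop := ∀ i, z i = 1 ∨ z i = -1

def BlockPattern {n : ℕ} (A : Matrix (Fin n) (Fin n) ℝ) (J : Finset (Fin n)) : Prop :=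
  (∀ i ∈ J, ∀ j ∈ J, A i j < 0) ∧ (∀ i ∉ J, ∀ j ∉ J, A i j < 0) ∧
  (∀ i ∈ J, ∀ j ∉ J, 0 < A i j) ∧ (∀ i ∉ J, ∀ j ∈ J, 0 < A i j)

def IsNMatrixSecond {n : ℕ} (A : Matrix (Fin n) (Fin n) ℝ) : Prop :=
  IsNMatrix A ∧ ∀ i j, A i j ≤ 0

def IsNMatrixFirst {n : ℕ} (A : Matrix (Fin n) (Fin n) ℝ) (J : Finset (Fin n)) : Prop :=
  IsNMatrix A ∧ BlockPattern A J

def IsAlmostPSecond {n : ℕ} (A : Matrix (Fin n) (Fin n) ℝ) : Prop :=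
  IsUnit A.det ∧ IsNMatrix A⁻¹ ∧ ∀ i j, A⁻¹ i j < 0

def IsAlmostPFirst {n : ℕ} (A : Matrix (Fin n) (Fin n) ℝ) (J : Finset (Fin n)) : Prop :=
  IsUnit A.det ∧ IsNMatrixFirst A⁻¹ J

def InJ {n : ℕ} (J : Finset (Fin n)) (x : Fin n → ℝ) : Prop :=
  (∀ j ∈ J, 0 < x j) ∧ (∀ j ∉ J, x j < 0)

def Semipos {p q : Type*} [Fintype q] (M : Matrix p q ℝ) : Prop :=
  ∃ x : q → ℝ, (∀ j, 0 ≤ x j) ∧ ∀ i, 0 < M.mulVec x i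

def MinSemipos {m n : ℕ} (M : Matrix (Fin m) (Fin n) ℝ) : Prop :=
  Semipos M ∧
  ∀ j₀ : Fin n, ¬ Semipos (M.submatrix id (fun j : {j : Fin n // j ≠ j₀} => (j : Fin n)))

/-!
Conjugating by the signature matrix `diagonal σ`, with `σ = -1` on `J` and `1` off `J`, preserves
principal minors and turns the block pattern into an entrywise negative matrix `B`. So it suffices
to show that an entrywise negative `B` is an N-matrix iff every vector whose sign `B` reverses is
nonnegative or nonpositive.

If `B` is an N-matrix and reverses the sign of some `x` with coordinates of both signs, scaling the
negative part of `x` by a suitable `t ≥ 1` keeps the sign reversal and makes `(B w)_k = 0` at some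
`k` with `w_k ≠ 0`. On the support of `w` this gives `(B + D) w = 0` with `D ≥ 0` diagonal and
`D_kk = 0`. Expanding `det (B + D)` in principal minors of `B`, every term is nonpositive and the
one with no factor from `D` is negative, so `B + D` is nonsingular: a contradiction.

Conversely, by induction on principal submatrices: if all proper principal minors of `B` are
negative but `det B ≥ 0`, the `k`-th column `x` of `adjugate B` has `x_k < 0` and
`B x = (det B) e_k`, so `B` reverses the sign of `x`. Hence `x ≤ 0`, and then `(B x)_i > 0` for
every `i`, contradicting `(B x)_i = 0` for `i ≠ k`.
-/

namespace Matrix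

section PrincipalMinor

variable {ι R : Type*} [DecidableEq ι] [CommRing R]

noncomputable def principalMinor (A : Matrix ι ι R) (s : Finset ι) : R :=
  (A.submatrix ((↑) : s → ι) ((↑) : s → ι)).det

theorem principalMinor_singleton (A : Matrix ι ι R) (a : ι) : A.principalMinor {a} = A a a := by
  let : Unique ({a} : Finset ι) :=
    ⟨⟨⟨a, mem_singleton_self a⟩⟩, fun b => Subtype.ext (mem_singleton.mp b.2)⟩
  rw [principalMinor, det_unique]
  rfl

theorem principalMinor_submatrix {κ : Type*} [DecidableEq κ] (A : Matrix ι ι R) (f : κ ↪ ι)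
    (t : Finset κ) : (A.submatrix f f).principalMinor t = A.principalMinor (t.map f) := by
  rw [principalMinor, principalMinor, ← det_submatrix_equiv_self (equivMap f t)]
  rfl

variable [Fintype ι]

theorem det_add_diagonal (A : Matrix ι ι R) (d : ι → R) :
    (A + diagonal d).det = ∑ s : Finset ι, (∏ i ∈ s, d i) * A.principalMinor sᶜ := by
  have hrows : ∀ s : Finset ι, s.piecewise (fun i => diagonal d i) (fun i => A i) =
      fun i => (if i ∈ s then d i else 1) • sᶜ.piecewise A.row (row 1) i := by
    intro s
    ext i j
    by_cases hi : i ∈ s <;> simp [hi, diagonal_apply, one_apply]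
  rw [add_comm]
  change detRowAlternating ((fun i => diagonal d i) + (fun i => A i)) = _
  rw [AlternatingMap.map_add_univ]
  refine Finset.sum_congr rfl fun s _ => ?_
  rw [hrows, AlternatingMap.map_smul_univ, Finset.prod_ite_mem, univ_inter, smul_eq_mul]
  exact congrArg _ (det_piecewise_one_eq_submatrix_det A sᶜ)

theorem adjugate_apply_self (A : Matrix ι ι R) (k : ι) :
    adjugate A k k = A.principalMinor (univ.erase k) := by
  rw [adjugate_apply, principalMinor, ← det_piecewise_one_eq_submatrix_det]
  congr 1
  ext i j
  by_cases hik : i = k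
  · subst hik
    simp [one_apply, Pi.single_apply, eq_comm]
  · simp [hik]

end PrincipalMinor

section SignReversal

variable {ι : Type*} [Fintype ι]

def ReversesSign (A : Matrix ι ι ℝ) (x : ι → ℝ) : Prop :=
  ∀ i, x i * (A *ᵥ x) i ≤ 0

theorem mulVec_pos_of_neg_of_nonpos {A : Matrix ι ι ℝ} (hA : ∀ i j, A i j < 0) {v : ι → ℝ}
    (hv : v ≤ 0) {j₀ : ι} (hj₀ : v j₀ < 0) (i : ι) : 0 < (A *ᵥ v) i :=
  Finset.sum_pos' (fun j _ => mul_nonneg_of_nonpos_of_nonpos (hA i j).le (hv j))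
    ⟨j₀, mem_univ _, mul_pos_of_neg_of_neg (hA i j₀) hj₀⟩

theorem submatrix_mulVec_of_support (A : Matrix ι ι ℝ) {s : Finset ι} {x : ι → ℝ}
    (hx : ∀ i ∉ s, x i = 0) (i : s) :
    (A.submatrix ((↑) : s → ι) ((↑) : s → ι) *ᵥ fun j => x j) i = (A *ᵥ x) i := by
  simp only [mulVec, dotProduct, submatrix_apply]
  rw [Finset.sum_coe_sort s fun j => A i j * x j]
  exact Finset.sum_subset (subset_univ s) fun j _ hj => by rw [hx j hj, mul_zero]

theorem exists_reversesSign_mulVec_eq_zero {A : Matrix ι ι ℝ} (hA : ∀ i j, A i j < 0)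
    {x : ι → ℝ} (hx : A.ReversesSign x) {i₀ j₀ : ι} (hi₀ : 0 < x i₀) (hj₀ : x j₀ < 0) :
    ∃ w k, A.ReversesSign w ∧ w k ≠ 0 ∧ (A *ᵥ w) k = 0 := by
  set u : ι → ℝ := fun i => max (x i) 0
  set v : ι → ℝ := fun i => min (x i) 0
  have hq : ∀ i, 0 < (A *ᵥ v) i :=
    mulVec_pos_of_neg_of_nonpos hA (fun i => min_le_right _ _) (min_lt_of_left_lt hj₀)
  have hx_eq : x = u + v := funext fun i => by
    change x i = max (x i) 0 + min (x i) 0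
    rw [max_add_min, add_zero]
  have hAx : ∀ i, (A *ᵥ x) i = (A *ᵥ u) i + (A *ᵥ v) i := fun i => by
    rw [hx_eq, mulVec_add, Pi.add_apply]
  -- `w = u + t • v` reverses signs on the positive part of `x` exactly when `t` stays below
  -- this ratio; `k` is where it is smallest
  obtain ⟨k, hk, hmin⟩ := exists_min_image (univ.filter fun i => 0 < x i)
    (fun i => -(A *ᵥ u) i / (A *ᵥ v) i) ⟨i₀, by simpa using hi₀⟩
  set t := -(A *ᵥ u) k / (A *ᵥ v) k
  have hxk : 0 < x k := by simpa using hk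
  have ht : 1 ≤ t := by
    have := hx k
    rw [hAx] at this
    rw [le_div_iff₀ (hq k)]
    nlinarith
  have hAw : ∀ i, (A *ᵥ (u + t • v)) i = (A *ᵥ u) i + t * (A *ᵥ v) i := fun i => by
    rw [mulVec_add, mulVec_smul, Pi.add_apply, Pi.smul_apply, smul_eq_mul]
  refine ⟨u + t • v, k, fun i => ?_, ?_, ?_⟩
  · have hxi := hx i
    rw [hAx] at hxi
    rw [hAw, Pi.add_apply, Pi.smul_apply, smul_eq_mul]
    rcases lt_or_ge 0 (x i) with h | h
    · have hti := hmin i (by simpa using h)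
      rw [le_div_iff₀ (hq i)] at hti
      simp only [u, v, max_eq_left h.le, min_eq_right h.le, mul_zero, add_zero]
      nlinarith
    · simp only [u, v, max_eq_right h, min_eq_left h, zero_add]
      have h1 : (t - 1) * (A *ᵥ v) i * x i ≤ 0 :=
        mul_nonpos_of_nonneg_of_nonpos (mul_nonneg (sub_nonneg.mpr ht) (hq i).le) h
      have h2 : x i * ((A *ᵥ u) i + t * (A *ᵥ v) i) ≤ 0 := by nlinarith
      nlinarith
  · simp [u, v, hxk.le, hxk.ne']
  · rw [hAw, div_mul_cancel₀ _ (hq k).ne', add_neg_cancel]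

variable [DecidableEq ι]

theorem det_add_diagonal_neg {A : Matrix ι ι ℝ}
    (hA : ∀ s : Finset ι, s.Nonempty → A.principalMinor s < 0) {d : ι → ℝ} (hd : 0 ≤ d)
    {k : ι} (hk : d k = 0) : (A + diagonal d).det < 0 := by
  rw [det_add_diagonal]
  refine (Finset.sum_lt_sum (g := 0) (fun s _ => ?_) ⟨∅, mem_univ _, ?_⟩).trans_eq sum_const_zero
  · by_cases hks : k ∈ s
    · simp [Finset.prod_eq_zero hks hk]
    · exact mul_nonpos_of_nonneg_of_nonpos (prod_nonneg fun i _ => hd i)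
        (hA _ ⟨k, mem_compl.mpr hks⟩).le
  · simpa using hA univ ⟨k, mem_univ k⟩

theorem not_reversesSign_of_mulVec_eq_zero {A : Matrix ι ι ℝ}
    (hA : ∀ s : Finset ι, s.Nonempty → A.principalMinor s < 0) {x : ι → ℝ} {k : ι}
    (hxk : x k ≠ 0) (hAxk : (A *ᵥ x) k = 0) : ¬ A.ReversesSign x := by
  intro hx
  set S := univ.filter fun i => x i ≠ 0
  set B := A.submatrix ((↑) : S → ι) ((↑) : S → ι)
  set z : S → ℝ := fun i => x i
  have hBz : ∀ i, (B *ᵥ z) i = (A *ᵥ x) i :=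
    submatrix_mulVec_of_support A fun i hi => by simpa [S] using hi
  have hz : ∀ i, z i ≠ 0 := fun i => (mem_filter.mp i.2).2
  have hkS : k ∈ S := by simpa [S]
  set d : S → ℝ := fun i => -(z i * (B *ᵥ z) i) / z i ^ 2
  have hd : 0 ≤ d := fun i => div_nonneg (neg_nonneg.mpr (by rw [hBz]; exact hx i)) (sq_nonneg _)
  have hdk : d ⟨k, hkS⟩ = 0 := by simp [d, hBz, hAxk]
  have hker : (B + diagonal d) *ᵥ z = 0 := by
    ext i
    rw [add_mulVec, Pi.add_apply, mulVec_diagonal, Pi.zero_apply]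
    change (B *ᵥ z) i + -(z i * (B *ᵥ z) i) / z i ^ 2 * z i = 0
    field_simp [hz i]
    ring
  have hsing : (B + diagonal d).det = 0 :=
    exists_mulVec_eq_zero_iff.mp ⟨z, fun h => hz ⟨k, hkS⟩ (congrFun h _), hker⟩
  have hB : ∀ t : Finset S, t.Nonempty → B.principalMinor t < 0 := fun t ht =>
    (principalMinor_submatrix A (Function.Embedding.subtype _) t).trans_lt (hA _ ht.map)
  exact (det_add_diagonal_neg hB hd hdk).ne hsing

theorem nonneg_or_nonpos_of_reversesSign {A : Matrix ι ι ℝ} (hA : ∀ i j, A i j < 0)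
    (hN : ∀ s : Finset ι, s.Nonempty → A.principalMinor s < 0) {x : ι → ℝ}
    (hx : A.ReversesSign x) : 0 ≤ x ∨ x ≤ 0 := by
  by_contra! h
  simp only [Pi.le_def, Pi.zero_apply, not_forall, not_le] at h
  obtain ⟨⟨j₀, hj₀⟩, ⟨i₀, hi₀⟩⟩ := h
  obtain ⟨w, k, hw, hwk, hAwk⟩ := exists_reversesSign_mulVec_eq_zero hA hx hi₀ hj₀
  exact not_reversesSign_of_mulVec_eq_zero hN hwk hAwk hw

theorem det_neg_of_reversesSign [Nontrivial ι] {A : Matrix ι ι ℝ} (hA : ∀ i j, A i j < 0)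
    (hrev : ∀ x, A.ReversesSign x → 0 ≤ x ∨ x ≤ 0)
    (hminor : ∀ k, A.principalMinor (univ.erase k) < 0) : A.det < 0 := by
  by_contra! hdet
  obtain ⟨k⟩ := ‹Nontrivial ι›.to_nonempty
  obtain ⟨i, hik⟩ := exists_ne k
  set x := adjugate A *ᵥ Pi.single k 1
  have hAx : A *ᵥ x = A.det • Pi.single k 1 := by
    rw [mulVec_mulVec, mul_adjugate, smul_mulVec, one_mulVec]
  have hxk : x k < 0 := by
    change (adjugate A *ᵥ Pi.single k 1) k < 0
    rw [mulVec_single_one, col_apply, adjugate_apply_self]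
    exact hminor k
  have hx : A.ReversesSign x := fun j => by
    rw [hAx]
    by_cases hjk : j = k
    · subst hjk
      simpa using mul_nonpos_of_nonpos_of_nonneg hxk.le hdet
    · simp [hjk]
  rcases hrev x hx with hnn | hnp
  · exact (hnn k).not_gt hxk
  · have := mulVec_pos_of_neg_of_nonpos hA hnp hxk i
    simp [hAx, hik] at this

theorem nonneg_or_nonpos_of_reversesSign_submatrix {A : Matrix ι ι ℝ}
    (hrev : ∀ x, A.ReversesSign x → 0 ≤ x ∨ x ≤ 0) (s : Finset ι) (z : s → ℝ)
    (hz : (A.submatrix ((↑) : s → ι) ((↑) : s → ι)).ReversesSign z) : 0 ≤ z ∨ z ≤ 0 := by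
  set x : ι → ℝ := fun i => if h : i ∈ s then z ⟨i, h⟩ else 0
  have hxs : ∀ i ∉ s, x i = 0 := fun i hi => dif_neg hi
  have hxz : (fun i : s => x i) = z := funext fun i => dif_pos i.2
  have hx : A.ReversesSign x := fun i => by
    by_cases hi : i ∈ s
    · have := hz ⟨i, hi⟩
      rwa [← hxz, submatrix_mulVec_of_support A hxs] at this
    · rw [hxs i hi, zero_mul]
  rcases hrev x hx with h | h
  · exact .inl fun i => hxz ▸ h i
  · exact .inr fun i => hxz ▸ h i

theorem principalMinor_neg_of_reversesSign {A : Matrix ι ι ℝ} (hA : ∀ i j, A i j < 0)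
    (hrev : ∀ x, A.ReversesSign x → 0 ≤ x ∨ x ≤ 0) (s : Finset ι) (hs : s.Nonempty) :
    A.principalMinor s < 0 := by
  induction s using Finset.strongInduction with
  | H s ih =>
  obtain ⟨a, rfl⟩ | hnt := hs.exists_eq_singleton_or_nontrivial
  · rw [principalMinor_singleton]
    exact hA a a
  · have : Nontrivial s := hnt.coe_sort
    refine det_neg_of_reversesSign (fun i j => hA i j)
      (nonneg_or_nonpos_of_reversesSign_submatrix hrev s) fun k => ?_
    refine (principalMinor_submatrix A (Function.Embedding.subtype _) _).trans_lt
      (ih _ ?_ univ_nontrivial.erase_nonempty.map)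
    refine (ssubset_iff_of_subset ?_).mpr ⟨k, k.2, by simp⟩
    intro i hi
    obtain ⟨j, -, rfl⟩ := mem_map.mp hi
    exact j.2

theorem principalMinor_neg_iff_reversesSign {A : Matrix ι ι ℝ} (hA : ∀ i j, A i j < 0) :
    (∀ s : Finset ι, s.Nonempty → A.principalMinor s < 0) ↔
      ∀ x, A.ReversesSign x → 0 ≤ x ∨ x ≤ 0 :=
  ⟨fun hN _ hx => nonneg_or_nonpos_of_reversesSign hA hN hx,
    principalMinor_neg_of_reversesSign hA⟩

section Signature

variable {σ : ι → ℝ} (hσ : ∀ i, σ i * σ i = 1)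
include hσ

theorem principalMinor_diagonal_mul_mul_diagonal (A : Matrix ι ι ℝ) (s : Finset ι) :
    (diagonal σ * A * diagonal σ).principalMinor s = A.principalMinor s := by
  have hsub : (diagonal σ * A * diagonal σ).submatrix ((↑) : s → ι) ((↑) : s → ι) =
      diagonal (fun i : s => σ i) * A.submatrix (↑) (↑) * diagonal (fun i : s => σ i) := by
    ext i j
    simp [diagonal_mul, mul_diagonal]
  rw [principalMinor, hsub, det_mul, det_mul, det_diagonal, mul_right_comm, ← prod_mul_distrib,
    prod_eq_one fun (i : s) _ => hσ i, one_mul, principalMinor]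

theorem reversesSign_diagonal_mul_mul_diagonal_iff (A : Matrix ι ι ℝ) (x : ι → ℝ) :
    (diagonal σ * A * diagonal σ).ReversesSign (σ * x) ↔ A.ReversesSign x := by
  have hmul : ∀ i, ((diagonal σ * A * diagonal σ) *ᵥ (σ * x)) i = σ i * (A *ᵥ x) i := fun i => by
    rw [← mulVec_mulVec, ← mulVec_mulVec, mulVec_diagonal]
    congr
    ext j
    rw [mulVec_diagonal, Pi.mul_apply, ← mul_assoc, hσ, one_mul]
  refine forall_congr' fun i => ?_
  rw [hmul, Pi.mul_apply, mul_mul_mul_comm, hσ, one_mul]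

end Signature

end SignReversal

end Matrix

section BlockSign

variable {ι : Type*} [DecidableEq ι]

def blockSign (J : Finset ι) (i : ι) : ℝ :=
  if i ∈ J then -1 else 1

theorem blockSign_mul_self (J : Finset ι) (i : ι) : blockSign J i * blockSign J i = 1 := by
  unfold blockSign
  split_ifs <;> norm_num

theorem nonneg_blockSign_mul_iff (J : Finset ι) (x : ι → ℝ) :
    0 ≤ blockSign J * x ↔ (∀ i ∈ J, x i ≤ 0) ∧ ∀ i ∉ J, 0 ≤ x i := by
  simp only [Pi.le_def, Pi.zero_apply, Pi.mul_apply, blockSign]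
  constructor
  · exact fun h => ⟨fun i hi => by simpa [hi] using h i, fun i hi => by simpa [hi] using h i⟩
  · rintro ⟨hJ, hJc⟩ i
    by_cases hi : i ∈ J <;> simp [hi, hJ, hJc]

theorem blockSign_mul_nonpos_iff (J : Finset ι) (x : ι → ℝ) :
    blockSign J * x ≤ 0 ↔ (∀ i ∈ J, 0 ≤ x i) ∧ ∀ i ∉ J, x i ≤ 0 := by
  simp only [Pi.le_def, Pi.zero_apply, Pi.mul_apply, blockSign]
  constructor
  · exact fun h => ⟨fun i hi => by simpa [hi] using h i, fun i hi => by simpa [hi] using h i⟩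
  · rintro ⟨hJ, hJc⟩ i
    by_cases hi : i ∈ J <;> simp [hi, hJ, hJc]

end BlockSign

theorem BlockPattern.diagonal_blockSign_mul_mul_diagonal_neg {n : ℕ}
    {A : Matrix (Fin n) (Fin n) ℝ} {J : Finset (Fin n)} (hB : BlockPattern A J) (i j : Fin n) :
    (diagonal (blockSign J) * A * diagonal (blockSign J)) i j < 0 := by
  obtain ⟨hJJ, hJcJc, hJJc, hJcJ⟩ := hB
  simp only [diagonal_mul, mul_diagonal, blockSign]
  by_cases hi : i ∈ J <;> by_cases hj : j ∈ J <;> simp [hi, hj]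
  exacts [hJJ i hi j hj, hJJc i hi j hj, hJcJ i hi j hj, hJcJc i hi j hj]

theorem stmt6_general {n : ℕ} (A : Matrix (Fin n) (Fin n) ℝ) (J : Finset (Fin n))
    (hB : BlockPattern A J) :
    IsNMatrix A ↔
      ∀ x : Fin n → ℝ, (∀ i, x i * A.mulVec x i ≤ 0) →
        ((∀ i ∈ J, x i ≤ 0) ∧ (∀ i ∉ J, 0 ≤ x i)) ∨
        ((∀ i ∈ J, 0 ≤ x i) ∧ (∀ i ∉ J, x i ≤ 0)) := by
  set σ := blockSign J
  have hσ : ∀ i, σ i * σ i = 1 := blockSign_mul_self J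
  have hσx : Function.Involutive (σ * ·) := fun x => by
    ext i
    simp only [Pi.mul_apply, ← mul_assoc, hσ, one_mul]
  calc IsNMatrix A ↔ ∀ s : Finset (Fin n), s.Nonempty →
        (diagonal σ * A * diagonal σ).principalMinor s < 0 := by
        simp only [principalMinor_diagonal_mul_mul_diagonal hσ]
        rfl
    _ ↔ ∀ y, (diagonal σ * A * diagonal σ).ReversesSign y → 0 ≤ y ∨ y ≤ 0 :=
        principalMinor_neg_iff_reversesSign hB.diagonal_blockSign_mul_mul_diagonal_neg
    _ ↔ _ := by
        rw [hσx.surjective.forall]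
        simp only [reversesSign_diagonal_mul_mul_diagonal_iff hσ, nonneg_blockSign_mul_iff,
          blockSign_mul_nonpos_iff, σ]
        rfl

theorem stmt6 {n : ℕ} (A : Matrix (Fin n) (Fin n) ℝ) (J : Finset (Fin n))
    (hJ : J.Nonempty) (hJ2 : J ≠ Finset.univ) (hB : BlockPattern A J) :
    IsNMatrix A ↔
      ∀ x : Fin n → ℝ, (∀ i, x i * A.mulVec x i ≤ 0) →
        ((∀ i ∈ J, x i ≤ 0) ∧ (∀ i ∉ J, 0 ≤ x i)) ∨
        ((∀ i ∈ J, 0 ≤ x i) ∧ (∀ i ∉ J, x i ≤ 0)) :=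
  stmt6_general A J hB
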